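/- arXiv:1503.01628 — 8 statements merged into one kernel-verified Lean document; each statement's English description precedes it below -/
import Mathlib

section
/- The family of 2-labelled graphs S_k^∘ (k ≥ 3), where S_k^∘ is S_k with vertices x_1, y_1, x_k, y_k coloured white and all other vertices black, forms an infinite antichain under the labelled induced subgraph relation: for distinct k < k', there is no injective map from V(S_k^∘) to V(S_{k'}^∘) that preserves both adjacency/non-adjacency and vertex colours. -/
def SAdj (k : ℕ) : (Fin k ⊕ Fin k) → (Fin k ⊕ Fin k) → Prop
  | Sum.inl i, Sum.inr j => j.val = i.val ∨ i.val + 2 ≤ j.val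
  | Sum.inr j, Sum.inl i => j.val = i.val ∨ i.val + 2 ≤ j.val
  | _, _ => False

/-- The graph `S_k`: vertices `Sum.inl i` are the `x_{i+1}` and `Sum.inr j` are the
`y_{j+1}` (0-indexed), with `x_i ~ y_j` iff `j = i` or `j ≥ i + 2`. -/
def SG (k : ℕ) : SimpleGraph (Fin k ⊕ Fin k) where
  Adj := SAdj k
  symm := by constructor; rintro (i|i) (j|j) h <;> simp_all [SAdj]
  loopless := by constructor; rintro (i|i) h <;> simp_all [SAdj]

/-- The 2-colouring of S_k: the vertices x_1, y_1, x_k, y_k are white (true),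
all others black (false). -/
def Scolor (k : ℕ) : (Fin k ⊕ Fin k) → Bool
  | Sum.inl i => decide (i.val = 0 ∨ i.val = k - 1)
  | Sum.inr i => decide (i.val = 0 ∨ i.val = k - 1)

/-!
The white vertices `y₁ x₁ y_k x_k` of `S_k` induce a path, so a colour-preserving embedding
`S_k → S_{k'}` maps it onto the white path of `S_{k'}`, in order or reversed; composing with the
automorphism `x_i ↦ y_{k'+1-i}, y_j ↦ x_{k'+1-j}` of `S_{k'}` we may assume in order. As `x₁` and
`y_k` go to `x₁` and `y_{k'}`, the embedding keeps the two sides, and then the edge `x_i y_i`, the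
non-edge `x_{i-1} y_i` and injectivity show inductively that it fixes every `x_i` and `y_i`.
Hence `y_k ↦ y_k`, contradicting `y_k ↦ y_{k'}`.
-/

open SimpleGraph Function Sum

theorem SimpleGraph.Embedding.pathGraph_four_eq_id_or_rev (π : pathGraph 4 ↪g pathGraph 4) :
    ⇑π = id ∨ ⇑π = Fin.rev := by
  have key : ∀ g : Fin 4 → Fin 4,
      (∀ a b, (pathGraph 4).Adj (g a) (g b) ↔ (pathGraph 4).Adj a b) → g = id ∨ g = Fin.rev := by
    simp only [pathGraph_adj]; decide +kernel
  exact key π fun _ _ => π.map_adj_iff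

theorem Fin.val_le_apply_of_injective {k l : ℕ} {φ : Fin k → Fin l} (hφ : Injective φ)
    {i : Fin k} (h : ∀ j < i, (φ j : ℕ) = j) : (i : ℕ) ≤ φ i := by
  by_contra! hlt
  have hj := h ⟨φ i, by omega⟩ (Fin.mk_lt_of_lt_val hlt)
  exact hlt.ne (congrArg Fin.val (hφ (Fin.ext hj : φ ⟨φ i, _⟩ = φ i)))

theorem SimpleGraph.Embedding.exists_comp_eq_comp {V W X Y : Type*} {G : SimpleGraph V}
    {H : SimpleGraph W} {K : SimpleGraph X} {L : SimpleGraph Y}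
    (f : G ↪g H) (w : K ↪g G) (w' : L ↪g H) (hf : ∀ a, ∃ b, w' b = f (w a)) :
    ∃ g : K ↪g L, ∀ a, w' (g a) = f (w a) := by
  choose g hg using hf
  refine ⟨⟨⟨g, fun a b hab => w.injective (f.injective ?_)⟩, ?_⟩, hg⟩
  · rw [← hg, ← hg, hab]
  · intro a b
    change L.Adj (g a) (g b) ↔ K.Adj a b
    rw [← w'.map_adj_iff, hg, hg, f.map_adj_iff, w.map_adj_iff]

namespace SG

variable {k n m : ℕ}

@[simp] theorem adj_inl_inr (i j : Fin k) :
    (SG k).Adj (inl i) (inr j) ↔ (j : ℕ) = i ∨ (i : ℕ) + 2 ≤ j := Iff.rfl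

@[simp] theorem adj_inr_inl (i j : Fin k) :
    (SG k).Adj (inr j) (inl i) ↔ (j : ℕ) = i ∨ (i : ℕ) + 2 ≤ j := Iff.rfl

@[simp] theorem not_adj_inl_inl (i j : Fin k) : ¬ (SG k).Adj (inl i) (inl j) := id

@[simp] theorem not_adj_inr_inr (i j : Fin k) : ¬ (SG k).Adj (inr i) (inr j) := id

def revIso (k : ℕ) : SG k ≃g SG k where
  toEquiv := (Equiv.sumCongr Fin.revPerm Fin.revPerm).trans (Equiv.sumComm _ _)
  map_rel_iff' := by
    rintro (i | i) (j | j) <;> simp <;> omega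

/-- `y₁, x₁, y_k, x_k` for `k = n + 1`, in the order of the induced path they form. -/
def whiteVertex (n : ℕ) : Fin 4 → Fin (n + 1) ⊕ Fin (n + 1) :=
  ![inr 0, inl 0, inr (Fin.last n), inl (Fin.last n)]

def whitePath (n : ℕ) (hn : 2 ≤ n) : pathGraph 4 ↪g SG (n + 1) where
  toFun := whiteVertex n
  inj' := by
    intro a b hab
    fin_cases a <;> fin_cases b <;> simp [whiteVertex, Fin.ext_iff] at hab ⊢ <;> omega
  map_rel_iff' := by
    intro a b
    fin_cases a <;> fin_cases b <;> simp [whiteVertex, pathGraph_adj] <;> omega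

@[simp] theorem coe_whitePath (hn : 2 ≤ n) : ⇑(whitePath n hn) = whiteVertex n := rfl

theorem Scolor_eq_true_iff (hn : 2 ≤ n) (v : Fin (n + 1) ⊕ Fin (n + 1)) :
    Scolor (n + 1) v = true ↔ v ∈ Set.range (whitePath n hn) := by
  simp only [coe_whitePath, Set.mem_range, Fin.exists_fin_succ, Fin.exists_fin_zero]
  rcases v with i | i <;> simp [Scolor, whiteVertex] <;>
    simp only [Fin.ext_iff, Fin.val_zero, Fin.val_last] <;> omega

theorem revIso_whiteVertex (i : Fin 4) :
    revIso (n + 1) (whiteVertex n i) = whiteVertex n i.rev := by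
  fin_cases i <;> simp [revIso, whiteVertex]

theorem exists_eq_sumMap (hm : 3 ≤ m) (f : SG (n + 1) ↪g SG (m + 1)) (hx : f (inl 0) = inl 0)
    (hy : f (inr (Fin.last n)) = inr (Fin.last m)) :
    ∃ g h : Fin (n + 1) → Fin (m + 1), ⇑f = Sum.map g h := by
  have sides : ∀ i, ∃ p q, f (inl i) = inl p ∧ f (inr i) = inr q := by
    intro i
    have hxy : (SG (m + 1)).Adj (f (inl i)) (f (inr i)) := f.map_adj_iff.2 (Or.inl rfl)
    rcases hp : f (inl i) with p | p <;> rcases hq : f (inr i) with q | q <;> rw [hp, hq] at hxy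
    · simp at hxy
    · exact ⟨p, q, rfl, rfl⟩
    · -- a crossed pair would be `y₂ x_{k'-1}`, which is an edge only for `k' = 3`
      have hp1 : ¬ (SG (m + 1)).Adj (inl 0) (inr p) := by
        rw [← hx, ← hp, f.map_adj_iff]; exact not_adj_inl_inl _ _
      have hq1 : ¬ (SG (m + 1)).Adj (inl q) (inr (Fin.last m)) := by
        rw [← hy, ← hq, f.map_adj_iff]; exact not_adj_inr_inr _ _
      simp only [adj_inl_inr, adj_inr_inl, Fin.val_zero, Fin.val_last] at hxy hp1 hq1
      omega
    · simp at hxy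
  choose g h hgh using sides
  exact ⟨g, h, funext fun v => by rcases v with i | i <;> simp [hgh]⟩

theorem val_eq_of_eq_sumMap (f : SG (n + 1) ↪g SG (m + 1)) {g h : Fin (n + 1) → Fin (m + 1)}
    (hf : ⇑f = Sum.map g h) (hg0 : g 0 = 0) (hh0 : h 0 = 0) (i : Fin (n + 1)) :
    (g i : ℕ) = i ∧ (h i : ℕ) = i := by
  obtain ⟨hg, hh⟩ := Sum.map_injective.1 (hf ▸ f.injective)
  have hadj : ∀ i j,
      (SG (m + 1)).Adj (inl (g i)) (inr (h j)) ↔ (SG (n + 1)).Adj (inl i) (inr j) := fun i j => by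
    simpa only [hf, Sum.map_inl, Sum.map_inr] using f.map_adj_iff (v := inl i) (w := inr j)
  induction i using WellFoundedLT.induction with
  | _ i ih =>
  rcases Fin.eq_zero_or_eq_succ i with rfl | ⟨j, rfl⟩
  · simp [hg0, hh0]
  have hgi := Fin.val_le_apply_of_injective hg fun l hl => (ih l hl).1
  have hhi := Fin.val_le_apply_of_injective hh fun l hl => (ih l hl).2
  have hj := ih j.castSucc Fin.castSucc_lt_succ
  have hji := (hadj j.castSucc j.succ).not.2 (by simp)
  have hii := (hadj j.succ j.succ).2 (by simp)
  simp only [adj_inl_inr, Fin.val_succ, Fin.val_castSucc] at hj hji hii hgi hhi ⊢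
  omega

theorem eq_of_embedding_map_whiteVertex (hm : 3 ≤ m) (f : SG (n + 1) ↪g SG (m + 1))
    (hw : ∀ i, f (whiteVertex n i) = whiteVertex m i) : n = m := by
  obtain ⟨g, h, hf⟩ := exists_eq_sumMap hm f (hw 1) (hw 2)
  have hg0 : g 0 = 0 := by simpa [hf, whiteVertex] using hw 1
  have hh0 : h 0 = 0 := by simpa [hf, whiteVertex] using hw 0
  have hlast : h (Fin.last n) = Fin.last m := by simpa [hf, whiteVertex] using hw 2
  simpa [hlast] using (val_eq_of_eq_sumMap f hf hg0 hh0 (Fin.last n)).2.symm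

end SG

/-- the coloured graphs S_k^∘ (k ≥ 3) form an antichain under the
labelled induced subgraph relation: for k < k'\'' there is no injective map
from S_k^∘ to S_{k'\''}^∘ preserving adjacency, non-adjacency and colours. -/
theorem Sk_labelled_antichain (k k' : ℕ) (hk : 3 ≤ k) (hkk : k < k') :
    ¬ ∃ φ : Fin k ⊕ Fin k → Fin k' ⊕ Fin k',
        Function.Injective φ ∧
        (∀ u v, (SG k).Adj u v ↔ (SG k').Adj (φ u) (φ v)) ∧
        (∀ u, Scolor k' (φ u) = Scolor k u) := by
  rintro ⟨φ, hinj, hadj, hcol⟩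
  obtain ⟨n, rfl⟩ : ∃ n, k = n + 1 := ⟨k - 1, by omega⟩
  obtain ⟨m, rfl⟩ : ∃ m, k' = m + 1 := ⟨k' - 1, by omega⟩
  have hn : 2 ≤ n := by omega
  have hm : 2 ≤ m := by omega
  let f : SG (n + 1) ↪g SG (m + 1) := ⟨⟨φ, hinj⟩, (hadj _ _).symm⟩
  obtain ⟨π, hπ⟩ := f.exists_comp_eq_comp (SG.whitePath n hn) (SG.whitePath m hm) fun i =>
    (SG.Scolor_eq_true_iff hm _).1 <| (hcol _).trans <| (SG.Scolor_eq_true_iff hn _).2 ⟨i, rfl⟩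
  simp only [SG.coe_whitePath] at hπ
  refine hkk.ne (congrArg (· + 1) ?_)
  rcases π.pathGraph_four_eq_id_or_rev with hid | hrev
  · exact SG.eq_of_embedding_map_whiteVertex (by omega) f fun i => by simpa [hid] using (hπ i).symm
  · refine SG.eq_of_embedding_map_whiteVertex (by omega) ((SG.revIso (m + 1)).toEmbedding.comp f)
      fun i => ?_
    simp [← hπ, hrev, SG.revIso_whiteVertex]
end

section
/- For any fixed finite alphabet X of size k and fixed S ⊆ X × X, the class of k-letter graphs over (X, S), labelled by a well-quasi-ordered set of labels, is well-quasi-ordered by the labelled induced subgraph relation. -/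
/-! Adjacency of two positions in a letter graph depends only on their letters and relative
order, so embedding one labelled word into another as a subword, preserving letters and
increasing labels, embeds the letter graphs as labelled induced subgraphs. Over the alphabet
`X × W`, ordered by "same letter, larger label", which is a well-quasi-order since `X` is
finite, Higman's lemma supplies such an embedding in every infinite sequence of words. -/

/-- The letter graph of the word `w : Fin m → X` with respect to the relation
`R` on the alphabet `X`: vertices are positions, and `p ~ q` for `p ≤ q`
iff `(w p, w q) ∈ R`. -/
def letterGraphOf {X : Type*} {m : ℕ} (R : X → X → Prop) (w : Fin m → X) :
    SimpleGraph (Fin m) :=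
  SimpleGraph.fromRel (fun p q => p ≤ q ∧ R (w p) (w q))

theorem List.SublistForall₂.exists_orderEmbedding_ofFn {α β : Type*} {R : α → β → Prop}
    {m n : ℕ} {a : Fin m → α} {b : Fin n → β}
    (h : List.SublistForall₂ R (List.ofFn a) (List.ofFn b)) :
    ∃ e : Fin m ↪o Fin n, ∀ p, R (a p) (b (e p)) := by
  obtain ⟨l, hal, hlb⟩ := List.sublistForall₂_iff.1 h
  obtain ⟨hlen, hR⟩ := List.forall₂_iff_get.1 hal
  obtain ⟨e, he⟩ := List.sublist_iff_exists_fin_orderEmbedding_get_eq.1 hlb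
  rw [List.length_ofFn] at hlen
  refine ⟨(Fin.castOrderIso hlen).toOrderEmbedding.trans
    (e.trans (Fin.castOrderIso List.length_ofFn).toOrderEmbedding), fun p => ?_⟩
  have hp : R ((List.ofFn a).get (Fin.cast (by simp) p)) (l.get (Fin.cast hlen p)) :=
    hR p (by simp) (by omega)
  rw [he] at hp
  simp only [List.get_eq_getElem, List.getElem_ofFn] at hp
  exact hp

theorem WellQuasiOrdered.sublistForall₂ {α : Type*} {r : α → α → Prop} [IsPreorder α r]
    (hr : WellQuasiOrdered r) : WellQuasiOrdered (List.SublistForall₂ r) := by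
  rw [← Set.partiallyWellOrderedOn_univ_iff] at hr ⊢
  simpa using Set.PartiallyWellOrderedOn.partiallyWellOrderedOn_sublistForall₂ r hr

theorem WellQuasiOrdered.finSubword {α : Type*} {r : α → α → Prop} [IsPreorder α r]
    (hr : WellQuasiOrdered r) :
    WellQuasiOrdered fun a b : Σ m, Fin m → α =>
      ∃ e : Fin a.1 ↪o Fin b.1, ∀ p, r (a.2 p) (b.2 (e p)) := fun f => by
  obtain ⟨i, j, hij, h⟩ := hr.sublistForall₂ fun n => List.ofFn (f n).2
  exact ⟨i, j, hij, h.exists_orderEmbedding_ofFn⟩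

theorem IsPreorder.prod {α β : Type*} {r : α → α → Prop} {s : β → β → Prop}
    [IsPreorder α r] [IsPreorder β s] : IsPreorder (α × β) fun a b => r a.1 b.1 ∧ s a.2 b.2 where
  refl a := ⟨refl a.1, refl a.2⟩
  trans _ _ _ h h' := ⟨_root_.trans h.1 h'.1, _root_.trans h.2 h'.2⟩

theorem letterGraphOf_comp_orderEmbedding {X : Type*} {m n : ℕ} (R : X → X → Prop)
    (w : Fin n → X) (e : Fin m ↪o Fin n) :
    letterGraphOf R (w ∘ e) = (letterGraphOf R w).comap e := by
  ext u v
  simp [letterGraphOf, e.le_iff_le, e.injective.ne_iff]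

/-- Petkovšek: for a fixed finite alphabet `Fin k` and fixed
relation `R`, the `W`-labelled k-letter graphs over `(Fin k, R)` are
well-quasi-ordered by the labelled induced subgraph relation, whenever the
label set `W` is a well-quasi-ordered quasi-order (every infinite sequence in
`W` has an increasing pair). A labelled letter graph is given by a word
together with a labelling of its positions; a labelled induced subgraph
embedding is an injective map preserving adjacency, non-adjacency, and
increasing the labels. -/
theorem letter_graphs_labelled_wqo (k : ℕ) (R : Fin k → Fin k → Prop)
    (W : Type*) [Preorder W]
    (hW : ∀ g : ℕ → W, ∃ i j : ℕ, i < j ∧ g i ≤ g j)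
    (f : ℕ → Σ m : ℕ, (Fin m → Fin k) × (Fin m → W)) :
    ∃ i j : ℕ, i < j ∧
      ∃ φ : Fin (f i).1 → Fin (f j).1,
        Function.Injective φ ∧
        (∀ u v : Fin (f i).1,
          (letterGraphOf R (f i).2.1).Adj u v ↔
          (letterGraphOf R (f j).2.1).Adj (φ u) (φ v)) ∧
        (∀ u : Fin (f i).1, (f i).2.2 u ≤ (f j).2.2 (φ u)) := by
  have hletters : WellQuasiOrdered fun a b : Fin k × W => a.1 = b.1 ∧ a.2 ≤ b.2 :=
    (Finite.wellQuasiOrdered _).prod hW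
  have := IsPreorder.prod (α := Fin k) (β := W) (r := Eq) (s := (· ≤ ·))
  obtain ⟨i, j, hij, e, he⟩ := hletters.finSubword
    fun n => ⟨(f n).1, fun p => ((f n).2.1 p, (f n).2.2 p)⟩
  have hword : (f j).2.1 ∘ e = (f i).2.1 := funext fun p => (he p).1.symm
  refine ⟨i, j, hij, e, e.injective, fun u v => ?_, fun u => (he u).2⟩
  rw [← hword, letterGraphOf_comp_orderEmbedding, SimpleGraph.comap_adj]
end

section
/- For a graph G and an edge uv, the graph G*u*v*u equals G*v*u*v, where G*w denotes local complementation at w; i.e., the pivot on an edge is well-defined independently of the order of the endpoints. -/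
/-!
Write local complementation at `w` as the toggle `A a b ↦ A a b xor (A w a ∧ A w b)`.
Following the three toggles of `G*u*v*u` for an edge `uv` shows that `u` and `v` exchange their
neighbourhoods (each keeping the other as a neighbour), and that a pair `a, b` outside `{u, v}` is
toggled exactly when `(A u a ∧ A v b) xor (A v a ∧ A u b)`. This description is symmetric in `u` and
`v`, hence also describes `G*v*u*v`.
-/

/-- Local complementation of `G` at `v`: complement the edges inside `N(v)`. -/
def localComp {V : Type*} (G : SimpleGraph V) (v : V) : SimpleGraph V where
  Adj a b := a ≠ b ∧ ((G.Adj v a ∧ G.Adj v b) ↔ ¬ G.Adj a b)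
  symm := ⟨by
    rintro a b ⟨hne, h⟩
    have hadj : G.Adj a b ↔ G.Adj b a := G.adj_comm a b
    exact ⟨hne.symm, by tauto⟩⟩
  loopless := ⟨fun a h => h.1 rfl⟩

theorem SimpleGraph.ext_of_adj_pair {V : Type*} {H K : SimpleGraph V} (u v : V)
    (hu : ∀ x, H.Adj u x ↔ K.Adj u x) (hv : ∀ x, H.Adj v x ↔ K.Adj v x)
    (hrest : ∀ a b, a ≠ u → a ≠ v → b ≠ u → b ≠ v → (H.Adj a b ↔ K.Adj a b)) :
    H = K := by
  ext a b
  by_cases hau : a = u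
  · exact hau ▸ hu b
  by_cases hav : a = v
  · exact hav ▸ hv b
  by_cases hbu : b = u
  · rw [hbu, H.adj_comm, K.adj_comm]
    exact hu a
  by_cases hbv : b = v
  · rw [hbv, H.adj_comm, K.adj_comm]
    exact hv a
  exact hrest a b hau hav hbu hbv

section

variable {V : Type*} {G : SimpleGraph V} {u v w a b x : V}

theorem localComp_adj_iff :
    (localComp G w).Adj a b ↔ a ≠ b ∧ Xor (G.Adj a b) (G.Adj w a ∧ G.Adj w b) := by
  rw [xor_comm, xor_iff_iff_not]
  rfl

def pivot (G : SimpleGraph V) (u v : V) : SimpleGraph V :=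
  localComp (localComp (localComp G u) v) u

theorem pivot_adj_left (huv : G.Adj u v) :
    (pivot G u v).Adj u x ↔ x ≠ u ∧ (x = v ∨ G.Adj v x) := by
  have hne := huv.ne
  have hvu := huv.symm
  simp only [pivot, localComp_adj_iff]
  grind [SimpleGraph.adj_comm, SimpleGraph.irrefl]

theorem pivot_adj_right (huv : G.Adj u v) :
    (pivot G u v).Adj v x ↔ x ≠ v ∧ (x = u ∨ G.Adj u x) := by
  have hne := huv.ne
  have hvu := huv.symm
  simp only [pivot, localComp_adj_iff]
  grind [SimpleGraph.adj_comm, SimpleGraph.irrefl]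

theorem pivot_adj_of_ne (huv : G.Adj u v) (hau : a ≠ u) (hav : a ≠ v) (hbu : b ≠ u)
    (hbv : b ≠ v) :
    (pivot G u v).Adj a b ↔
      a ≠ b ∧ Xor (G.Adj a b) (Xor (G.Adj u a ∧ G.Adj v b) (G.Adj v a ∧ G.Adj u b)) := by
  have hne := huv.ne
  have hvu := huv.symm
  simp only [pivot, localComp_adj_iff]
  grind [SimpleGraph.adj_comm, SimpleGraph.irrefl]

theorem pivot_comm (huv : G.Adj u v) : pivot G u v = pivot G v u := by
  refine SimpleGraph.ext_of_adj_pair u v (fun x => ?_) (fun x => ?_) (fun a b hau hav hbu hbv => ?_)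
  · rw [pivot_adj_left huv, pivot_adj_right huv.symm]
  · rw [pivot_adj_right huv, pivot_adj_left huv.symm]
  · rw [pivot_adj_of_ne huv hau hav hbu hbv, pivot_adj_of_ne huv.symm hav hau hbv hbu,
      xor_comm (G.Adj u a ∧ G.Adj v b)]

end

/-- the pivot on an edge uv is well defined:
`G*u*v*u = G*v*u*v` for every edge uv of G. -/
theorem pivot_well_defined {V : Type*} (G : SimpleGraph V) (u v : V)
    (huv : G.Adj u v) :
    localComp (localComp (localComp G u) v) u
      = localComp (localComp (localComp G v) u) v :=
  pivot_comm huv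
end

section
/- If G is a bipartite graph and uv is an edge of G, then the pivot of G on uv (complementing the edges between N(u)∖{v} and N(v)∖{u}) is again a bipartite graph. -/
/-!
The given 2-colouring stays proper: the pivot only adds edges between `N(u)` and `N(v)`,
and these two sets lie in opposite colour classes because `u` and `v` do.
-/

/-- The pivot of `G` on the pair `u v`: complement the edges between
`N(u)∖{v}` and `N(v)∖{u}`. -/
def pivotG {V : Type*} (G : SimpleGraph V) (u v : V) : SimpleGraph V where
  Adj a b := a ≠ b ∧
    (((G.Adj u a ∧ a ≠ v ∧ G.Adj v b ∧ b ≠ u) ∨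
      (G.Adj u b ∧ b ≠ v ∧ G.Adj v a ∧ a ≠ u)) ↔ ¬ G.Adj a b)
  symm := ⟨by
    rintro a b ⟨hne, h⟩
    have hadj : G.Adj a b ↔ G.Adj b a := G.adj_comm a b
    exact ⟨hne.symm, by tauto⟩⟩
  loopless := ⟨fun a h => h.1 rfl⟩

theorem Bool.ne_of_ne_of_ne_of_ne {x y a b : Bool} (hxy : x ≠ y) (hxa : x ≠ a) (hyb : y ≠ b) :
    a ≠ b := by
  revert x y a b
  decide

theorem adj_or_of_pivotG_adj {V : Type*} {G : SimpleGraph V} {u v a b : V}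
    (h : (pivotG G u v).Adj a b) :
    G.Adj a b ∨ (G.Adj u a ∧ G.Adj v b) ∨ (G.Adj u b ∧ G.Adj v a) := by
  by_cases hab : G.Adj a b
  · exact Or.inl hab
  · rcases h.2.mpr hab with ⟨hua, -, hvb, -⟩ | ⟨hub, -, hva, -⟩
    exacts [Or.inr (Or.inl ⟨hua, hvb⟩), Or.inr (Or.inr ⟨hub, hva⟩)]

/-- if `G` is bipartite (its vertices admit a 2-partition into
independent sets) and `uv` is an edge of `G`, then the pivot of `G` on `uv`
is again bipartite. -/
theorem pivot_bipartite {V : Type*} (G : SimpleGraph V) (u v : V)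
    (huv : G.Adj u v) (P : V → Bool) (hP : ∀ a b, G.Adj a b → P a ≠ P b) :
    ∃ Q : V → Bool, ∀ a b, (pivotG G u v).Adj a b → Q a ≠ Q b := by
  refine ⟨P, fun a b hab => ?_⟩
  have hPuv := hP u v huv
  rcases adj_or_of_pivotG_adj hab with hab | ⟨hua, hvb⟩ | ⟨hub, hva⟩
  · exact hP a b hab
  · exact Bool.ne_of_ne_of_ne_of_ne hPuv (hP u a hua) (hP v b hvb)
  · exact (Bool.ne_of_ne_of_ne_of_ne hPuv (hP u b hub) (hP v a hva)).symm
end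

section
/- The graph Z_{2n,2n} contains Y_{n,n} as an induced subgraph, and Y_{2n,2n} contains Z_{n,n} as an induced subgraph; moreover, Z_{n,n} embeds into Y_{2n,2n} avoiding all vertices of the bottom row (row 1) of Y_{2n,2n}. -/
/-- Edge relation of the Z-grid, in 1-indexed coordinates. -/
def Zrel (i j i' j' : ℕ) : Prop :=
  (Odd i ∧ i' = i + 1 ∧ j' < j) ∨
  (Even i ∧ i' = i + 1 ∧ j ≤ j') ∨
  (Even i ∧ Odd i' ∧ i + 3 ≤ i')

/-- The Z-grid `Z_{m,k}`: vertex `(i,j)` denotes `z_{i+1,j+1}` (1-indexed). -/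
def Zgrid (m k : ℕ) : SimpleGraph (Fin m × Fin k) :=
  SimpleGraph.fromRel (fun u v =>
    Zrel (u.1.val + 1) (u.2.val + 1) (v.1.val + 1) (v.2.val + 1))

/-- Edge relation of the Y-grid, in 1-indexed coordinates. -/
def Yrel (i j i' j' : ℕ) : Prop :=
  (Odd i ∧ i' = i + 1 ∧ j' ≤ j) ∨
  (Even i ∧ i' = i + 1 ∧ j < j') ∨
  (Even i ∧ Odd i' ∧ i + 3 ≤ i') ∨
  (Odd i ∧ i = i' + 1 ∧ j = 1)

/-- The Y-grid `Y_{m,k}`: vertex `(i,j)` denotes `y_{i+1,j+1}` (1-indexed). -/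
def Ygrid (m k : ℕ) : SimpleGraph (Fin m × Fin k) :=
  SimpleGraph.fromRel (fun u v =>
    Yrel (u.1.val + 1) (u.2.val + 1) (v.1.val + 1) (v.2.val + 1))

/-!
Away from the bottom row the two grids differ by a shear: for `i, j, i', j' ≥ 1`, the vertices
`y_{i,i+j}` and `y_{i',i'+j'}` are adjacent exactly when `z_{i,j}` and `z_{i',j'}` are. So
`z_{i,j} ↦ y_{i,i+j}` embeds `Z_{n,n}` into `Y_{2n,2n}` above its bottom row. Conversely, the
inverse shear `y_{i,j} ↦ z_{i,n+j-i}` handles every `y_{i,j}` with `j ≥ 2`, while the bottom-row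
vertices `y_{i,1}`, which carry the extra edges (4), are placed by hand where they see exactly the
right neighbours: `y_{i,1} ↦ z_{i,1}` for even `i`, `y_{1,1} ↦ z_{1,2}`, and `y_{i,1} ↦ z_{i+2,1}`
for odd `i ≥ 3`.
-/

open Relation

/-- Vertices are handled in the 1-indexed coordinates `(i, j)` of the paper, ranging over
`box m k`; `toBox` and `ofBox` translate to and from the vertex type `Fin m × Fin k`. -/
abbrev box (m k : ℕ) : Set (ℕ × ℕ) := Set.Icc 1 (m, k)

section Box

variable {m k m' k' : ℕ}

lemma mem_box_iff {w : ℕ × ℕ} : w ∈ box m k ↔ 1 ≤ w.1 ∧ w.1 ≤ m ∧ 1 ≤ w.2 ∧ w.2 ≤ k := by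
  simp only [Set.mem_Icc, Prod.le_def, Prod.fst_one, Prod.snd_one]
  tauto

def toBox (v : Fin m × Fin k) : ℕ × ℕ := (v.1 + 1, v.2 + 1)

lemma toBox_mem (v : Fin m × Fin k) : toBox v ∈ box m k := by
  rw [mem_box_iff]
  simp only [toBox]
  omega

lemma toBox_injective : Function.Injective (toBox : Fin m × Fin k → ℕ × ℕ) := by
  rintro ⟨a, b⟩ ⟨c, d⟩ h
  simp only [toBox, Prod.mk.injEq, add_left_inj, Fin.val_inj] at h
  rw [h.1, h.2]

def ofBox (w : ℕ × ℕ) (hw : w ∈ box m k) : Fin m × Fin k :=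
  (⟨w.1 - 1, by rw [mem_box_iff] at hw; omega⟩, ⟨w.2 - 1, by rw [mem_box_iff] at hw; omega⟩)

lemma toBox_ofBox (w : ℕ × ℕ) (hw : w ∈ box m k) : toBox (ofBox w hw) = w := by
  rw [mem_box_iff] at hw
  ext <;> simp only [toBox, ofBox] <;> omega

variable (φ : ℕ × ℕ → ℕ × ℕ) (hmaps : Set.MapsTo φ (box m k) (box m' k'))
  (hinj : Set.InjOn φ (box m k))

def boxMap : Fin m × Fin k ↪ Fin m' × Fin k' where
  toFun v := ofBox (φ (toBox v)) (hmaps (toBox_mem v))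
  inj' u v h := by
    have h' := congrArg toBox h
    simp only [toBox_ofBox] at h'
    exact toBox_injective (hinj (toBox_mem u) (toBox_mem v) h')

lemma toBox_boxMap (v : Fin m × Fin k) : toBox (boxMap φ hmaps hinj v) = φ (toBox v) :=
  toBox_ofBox _ (hmaps (toBox_mem v))

def boxEmbedding {r s : ℕ × ℕ → ℕ × ℕ → Prop}
    (hadj : ∀ u ∈ box m k, ∀ v ∈ box m k, SymmGen s (φ u) (φ v) ↔ SymmGen r u v) :
    SimpleGraph.fromRel (fun u v : Fin m × Fin k => r (toBox u) (toBox v)) ↪g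
      SimpleGraph.fromRel (fun u v : Fin m' × Fin k' => s (toBox u) (toBox v)) where
  toEmbedding := boxMap φ hmaps hinj
  map_rel_iff' {u v} := by
    simp only [SimpleGraph.fromRel_adj, toBox_boxMap, (boxMap φ hmaps hinj).injective.ne_iff]
    exact and_congr_right fun _ => hadj _ (toBox_mem u) _ (toBox_mem v)

end Box

def ZAdj (u v : ℕ × ℕ) : Prop := SymmGen (fun u v => Zrel u.1 u.2 v.1 v.2) u v

def YAdj (u v : ℕ × ℕ) : Prop := SymmGen (fun u v => Yrel u.1 u.2 v.1 v.2) u v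

lemma ZAdj_comm {u v : ℕ × ℕ} : ZAdj u v ↔ ZAdj v u := symmGen_comm

lemma YAdj_comm {u v : ℕ × ℕ} : YAdj u v ↔ YAdj v u := symmGen_comm

section Shear

variable {i j i' j' : ℕ}

lemma Yrel_shear (hi : 1 ≤ i) (hj : 1 ≤ j) : Yrel i (i + j) i' (i' + j') ↔ Zrel i j i' j' := by
  simp only [Yrel, Zrel, Nat.odd_iff, Nat.even_iff]
  omega

lemma YAdj_shear (hi : 1 ≤ i) (hj : 1 ≤ j) (hi' : 1 ≤ i') (hj' : 1 ≤ j') :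
    YAdj (i, i + j) (i', i' + j') ↔ ZAdj (i, j) (i', j') :=
  or_congr (Yrel_shear hi hj) (Yrel_shear hi' hj')

lemma Yrel_add_snd (c : ℕ) (hj : 2 ≤ j) : Yrel i (j + c) i' (j' + c) ↔ Yrel i j i' j' := by
  simp only [Yrel, Nat.odd_iff, Nat.even_iff]
  omega

lemma YAdj_add_snd (c : ℕ) (hj : 2 ≤ j) (hj' : 2 ≤ j') :
    YAdj (i, j + c) (i', j' + c) ↔ YAdj (i, j) (i', j') :=
  or_congr (Yrel_add_snd c hj) (Yrel_add_snd c hj')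

end Shear

section BottomRow

variable {i : ℕ} {v : ℕ × ℕ}

lemma YAdj_bottom_of_even (hi : Even i) (hv : 1 ≤ v.2) :
    YAdj (i, 1) v ↔ Odd v.1 ∧ i ≤ v.1 + 1 := by
  simp only [YAdj, SymmGen, Yrel, Nat.odd_iff, Nat.even_iff] at *
  omega

lemma YAdj_bottom_of_odd (hi : Odd i) (hv : 1 ≤ v.2) :
    YAdj (i, 1) v ↔ Even v.1 ∧ (v.1 < i ∨ v.1 = i + 1 ∧ v.2 = 1) := by
  simp only [YAdj, SymmGen, Yrel, Nat.odd_iff, Nat.even_iff, and_true] at *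
  omega

lemma ZAdj_bottom_of_even (hi : Even i) (hv : 1 ≤ v.2) :
    ZAdj (i, 1) v ↔ Odd v.1 ∧ i ≤ v.1 + 1 ∧ (v.1 + 1 = i → 2 ≤ v.2) := by
  simp only [ZAdj, SymmGen, Zrel, Nat.odd_iff, Nat.even_iff] at *
  omega

lemma ZAdj_bottom_of_odd (hi : Odd i) (hv : 1 ≤ v.2) :
    ZAdj (i, 1) v ↔ Even v.1 ∧ (v.1 + 3 ≤ i ∨ v.1 + 1 = i ∧ v.2 ≤ 1) := by
  simp only [ZAdj, SymmGen, Zrel, Nat.odd_iff, Nat.even_iff] at *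
  omega

lemma ZAdj_one_two (hv₁ : 1 ≤ v.1) (hv₂ : 1 ≤ v.2) : ZAdj (1, 2) v ↔ v.1 = 2 ∧ v.2 ≤ 1 := by
  simp only [ZAdj, SymmGen, Zrel, Nat.odd_iff, Nat.even_iff, true_and] at *
  omega

end BottomRow

def zToY (v : ℕ × ℕ) : ℕ × ℕ := (v.1, v.1 + v.2)

lemma zToY_injective : Function.Injective zToY := by
  rintro ⟨i, j⟩ ⟨i', j'⟩ h
  simp only [zToY, Prod.mk.injEq] at h ⊢
  omega

lemma zToY_mapsTo (n : ℕ) : Set.MapsTo zToY (box n n) (box (2 * n) (2 * n)) := by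
  intro v hv
  rw [mem_box_iff] at hv ⊢
  simp only [zToY]
  omega

lemma YAdj_zToY {n : ℕ} {u v : ℕ × ℕ} (hu : u ∈ box n n) (hv : v ∈ box n n) :
    YAdj (zToY u) (zToY v) ↔ ZAdj u v := by
  rw [mem_box_iff] at hu hv
  exact YAdj_shear hu.1 hu.2.2.1 hv.1 hv.2.2.1

def yToZ (n : ℕ) (v : ℕ × ℕ) : ℕ × ℕ :=
  if 2 ≤ v.2 then (v.1, n + v.2 - v.1)
  else if Even v.1 then (v.1, 1)
  else if v.1 = 1 then (1, 2)
  else (v.1 + 2, 1)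

lemma yToZ_mapsTo (n : ℕ) : Set.MapsTo (yToZ n) (box n n) (box (2 * n) (2 * n)) := by
  rintro ⟨i, j⟩ h
  rw [mem_box_iff] at h ⊢
  simp only [yToZ]
  split_ifs <;> simp only [Nat.even_iff] at * <;> omega

lemma yToZ_injOn (n : ℕ) : Set.InjOn (yToZ n) (box n n) := by
  rintro ⟨i, j⟩ hu ⟨i', j'⟩ hv h
  rw [mem_box_iff] at hu hv
  simp only [yToZ] at h
  split_ifs at h <;> simp only [Nat.even_iff, Prod.mk.injEq] at * <;> omega

lemma ZAdj_yToZ_of_bottom {n i : ℕ} {v : ℕ × ℕ} (hu : (i, 1) ∈ box n n) (hv : v ∈ box n n) :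
    ZAdj (yToZ n (i, 1)) (yToZ n v) ↔ YAdj (i, 1) v := by
  have hv' := yToZ_mapsTo n hv
  rw [mem_box_iff] at hu hv hv'
  obtain ⟨i', j'⟩ := v
  rcases Nat.even_or_odd i with hi | hi
  · rw [show yToZ n (i, 1) = (i, 1) by simp [yToZ, hi], ZAdj_bottom_of_even hi hv'.2.2.1,
      YAdj_bottom_of_even hi hv.2.2.1]
    unfold yToZ at hv' ⊢
    split_ifs at hv' ⊢ <;> simp only [Nat.odd_iff, Nat.even_iff, true_and] at * <;> omega
  obtain rfl | h1 := eq_or_ne i 1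
  · rw [show yToZ n (1, 1) = (1, 2) by simp [yToZ], ZAdj_one_two hv'.1 hv'.2.2.1,
      YAdj_bottom_of_odd hi hv.2.2.1]
    unfold yToZ at hv' ⊢
    split_ifs at hv' ⊢ <;> simp only [Nat.odd_iff, Nat.even_iff] at * <;> omega
  · rw [show yToZ n (i, 1) = (i + 2, 1) by simp [yToZ, h1, Nat.not_even_iff_odd.mpr hi],
      ZAdj_bottom_of_odd (hi.add_even even_two) hv'.2.2.1, YAdj_bottom_of_odd hi hv.2.2.1]
    unfold yToZ at hv' ⊢
    split_ifs at hv' ⊢ <;> simp only [Nat.odd_iff, Nat.even_iff] at * <;> omega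

lemma ZAdj_yToZ {n : ℕ} {u v : ℕ × ℕ} (hu : u ∈ box n n) (hv : v ∈ box n n) :
    ZAdj (yToZ n u) (yToZ n v) ↔ YAdj u v := by
  obtain ⟨i, j⟩ := u
  obtain ⟨i', j'⟩ := v
  have hu' : 1 ≤ i ∧ i ≤ n ∧ 1 ≤ j ∧ j ≤ n := mem_box_iff.mp hu
  have hv' : 1 ≤ i' ∧ i' ≤ n ∧ 1 ≤ j' ∧ j' ≤ n := mem_box_iff.mp hv
  obtain rfl | hj := (show j = 1 ∨ 2 ≤ j by omega)
  · exact ZAdj_yToZ_of_bottom hu hv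
  obtain rfl | hj' := (show j' = 1 ∨ 2 ≤ j' by omega)
  · rw [ZAdj_comm, YAdj_comm]
    exact ZAdj_yToZ_of_bottom hv hu
  have hcol : ∀ a b, 2 ≤ b → a ≤ n → a + (n + b - a) = b + n := by omega
  simp only [yToZ, if_pos hj, if_pos hj']
  rw [← YAdj_shear (by omega) (by omega) (by omega) (by omega), hcol i j hj (by omega),
    hcol i' j' hj' (by omega), YAdj_add_snd n hj hj']

def zToYEmbedding (n : ℕ) : Zgrid n n ↪g Ygrid (2 * n) (2 * n) :=
  boxEmbedding zToY (zToY_mapsTo n) zToY_injective.injOn fun _ hu _ hv => YAdj_zToY hu hv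

def yToZEmbedding (n : ℕ) : Ygrid n n ↪g Zgrid (2 * n) (2 * n) :=
  boxEmbedding (yToZ n) (yToZ_mapsTo n) (yToZ_injOn n) fun _ hu _ hv => ZAdj_yToZ hu hv

lemma zToYEmbedding_snd_ne_zero (n : ℕ) (v : Fin n × Fin n) :
    ((zToYEmbedding n v).2 : ℕ) ≠ 0 := by
  have h := congrArg Prod.snd (toBox_boxMap zToY (zToY_mapsTo n) zToY_injective.injOn v)
  simp only [toBox, zToY] at h
  change ((boxMap zToY (zToY_mapsTo n) zToY_injective.injOn v).2 : ℕ) ≠ 0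
  omega

/-- `Z_{2n,2n}` contains `Y_{n,n}` as an induced subgraph,
`Y_{2n,2n}` contains `Z_{n,n}` as an induced subgraph, and moreover `Z_{n,n}`
embeds into `Y_{2n,2n}` avoiding all vertices of the bottom row (row 1,
i.e. row index 0) of `Y_{2n,2n}`. -/
theorem ZY_mutual_embeddings (n : ℕ) :
    Nonempty (Ygrid n n ↪g Zgrid (2 * n) (2 * n)) ∧
    Nonempty (Zgrid n n ↪g Ygrid (2 * n) (2 * n)) ∧
    ∃ f : Zgrid n n ↪g Ygrid (2 * n) (2 * n),
      ∀ v : Fin n × Fin n, ((f v).2 : ℕ) ≠ 0 :=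
  ⟨⟨yToZEmbedding n⟩, ⟨zToYEmbedding n⟩, zToYEmbedding n, zToYEmbedding_snd_ne_zero n⟩
end

section
/- For any n ≥ 1, every induced-subgraph embedding of the grid X_{n,4n−1} into an X-grid X_{M,N} (M ≥ n, N ≥ 4n−1) contains a copy of X_{n,n} occupying exactly n contiguous columns of X_{M,N}, with each column of X_{n,n} mapped into a single column of X_{M,N}. -/
/-- The X-grid `X_{m,k}` (m columns, k rows, 0-indexed): consecutive columns
induce a chain graph, `x_{i,j} ~ x_{i+1,j'}` iff `j ≥ j'`. -/
def Xgrid (m k : ℕ) : SimpleGraph (Fin m × Fin k) :=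
  SimpleGraph.fromRel (fun u v => v.1.val = u.1.val + 1 ∧ v.2.val ≤ u.2.val)

/-!
Place the image of `φ` in `ℤ × ℤ`, where `u ↦ -u` together with reversing the rows is a symmetry
of the X-grid, so the last column of a pair can be treated like the first. Two consecutive source
columns form a chain graph, and comparing which rows of one column see which rows of the other
shows that each source column is mapped into at most two target columns and switches between them
at most once. Going from one column to the next, the switching row stays put or moves up by one as
long as it is below the top two rows; with `4n - 1` rows this leaves a window of `n` rows where no
column switches. Along a row of that window consecutive columns land in adjacent target columns and
can never turn back, so the `n` columns fill `n` consecutive target columns, in increasing order or,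
after reflecting the source grid, in decreasing order.
-/

section FirstChange

def ChangesAtMostOnce {α : Type*} (k : ℕ) (f : ℕ → α) : Prop :=
  ∀ j₁ j₂ j₃, j₁ < j₂ → j₂ < j₃ → j₃ < k → f j₁ = f j₂ ∨ f j₂ = f j₃

variable {α : Type*} [DecidableEq α] {k : ℕ} {f : ℕ → α}

/-- The first row `j < k` with `f j ≠ f 0`, or `k` if there is none. -/
def firstChange (k : ℕ) (f : ℕ → α) : ℕ :=
  Nat.find (⟨k, Or.inl le_rfl⟩ : ∃ j, k ≤ j ∨ f j ≠ f 0)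

lemma apply_eq_of_lt_firstChange {j : ℕ} (hj : j < firstChange k f) : f j = f 0 := by
  have := Nat.find_min _ hj
  push Not at this
  exact this.2

lemma apply_firstChange_ne (h : firstChange k f < k) : f (firstChange k f) ≠ f 0 :=
  (Nat.find_spec (⟨k, Or.inl le_rfl⟩ : ∃ j, k ≤ j ∨ f j ≠ f 0)).resolve_left (not_le.2 h)

lemma firstChange_pos (hk : 0 < k) : 0 < firstChange k f := by
  by_contra! h
  have h0 : firstChange k f = 0 := by omega
  exact apply_firstChange_ne (h0 ▸ hk) (by rw [h0])

lemma ChangesAtMostOnce.apply_eq_of_firstChange_le (hf : ChangesAtMostOnce k f) {j : ℕ}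
    (ht : firstChange k f ≤ j) (hj : j < k) : f j = f (firstChange k f) := by
  rcases ht.eq_or_lt with ht | ht
  · rw [ht]
  · have h0 := firstChange_pos (k := k) (f := f) (by omega)
    exact ((hf 0 _ j h0 ht hj).resolve_left (apply_firstChange_ne (by omega)).symm).symm

lemma ChangesAtMostOnce.apply_eq_of_window (hf : ChangesAtMostOnce k f) {r m j : ℕ}
    (ht : firstChange k f ≤ r ∨ r + m ≤ firstChange k f) (hrj : r ≤ j) (hj : j < r + m)
    (hk : r + m ≤ k) : f j = f r := by
  rcases ht with ht | ht
  · rw [hf.apply_eq_of_firstChange_le (by omega) (by omega),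
      hf.apply_eq_of_firstChange_le ht (by omega)]
  · rw [apply_eq_of_lt_firstChange (f := f) (show j < firstChange k f by omega),
      apply_eq_of_lt_firstChange (f := f) (show r < firstChange k f by omega)]

end FirstChange

section Window

variable {n k : ℕ} {T : ℕ → ℕ}

lemma bounds_add_of_bounds_succ
    (hT : ∀ i, i + 1 < n → T i + 2 ≤ k → T i ≤ T (i + 1) ∧ T (i + 1) ≤ T i + 1) :
    ∀ t i, i + t < n → T i + t + 2 ≤ k → T i ≤ T (i + t) ∧ T (i + t) ≤ T i + t := by
  intro t
  induction t with
  | zero => intro i _ _; simp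
  | succ t ih =>
    intro i hi ht
    have ih := ih i (by omega) (by omega)
    have := hT (i + t) (by omega) (by omega)
    rw [← add_assoc]
    omega

/-- If some `T i₀ < n`, the bounds put every later `T i` below `2n - 1` and every earlier one
below `n` or above `3n - 2`, so `r = 2n - 1` works; otherwise `r = 0` does. -/
lemma exists_window_of_bounds_succ
    (hT : ∀ i, i + 1 < n → T i + 2 ≤ k → T i ≤ T (i + 1) ∧ T (i + 1) ≤ T i + 1)
    (hk : 4 * n - 1 ≤ k) : ∃ r, r + n ≤ k ∧ ∀ i < n, T i ≤ r ∨ r + n ≤ T i := by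
  by_cases hlow : ∃ i₀ < n, T i₀ < n
  · obtain ⟨i₀, hi₀, hTi₀⟩ := hlow
    refine ⟨2 * n - 1, by omega, fun i hi => ?_⟩
    rcases le_or_gt i₀ i with hle | hlt
    · have := (bounds_add_of_bounds_succ hT (i - i₀) i₀ (by omega) (by omega)).2
      rw [Nat.add_sub_cancel' hle] at this
      omega
    · by_cases hTi : T i + (i₀ - i) + 2 ≤ k
      · have := (bounds_add_of_bounds_succ hT (i₀ - i) i (by omega) hTi).1
        rw [Nat.add_sub_cancel' hlt.le] at this
        omega
      · omega
  · push Not at hlow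
    exact ⟨0, by omega, fun i hi => Or.inr (by simpa using hlow i hi)⟩

end Window

lemma eq_add_or_eq_sub_of_unit_steps {n : ℕ} (d : ℕ → ℤ)
    (hstep : ∀ i, i + 1 < n → d (i + 1) = d i + 1 ∨ d (i + 1) = d i - 1)
    (hturn : ∀ i, i + 2 < n → d (i + 2) ≠ d i) :
    (∀ i < n, d i = d 0 + i) ∨ (∀ i < n, d i = d 0 - i) := by
  have hconst : ∀ i, i + 1 < n → d (i + 1) - d i = d 1 - d 0 := by
    intro i
    induction i with
    | zero => intro _; rfl
    | succ i ih =>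
      intro hi
      have := ih (by omega)
      have := hstep i (by omega)
      have := hstep (i + 1) hi
      have : d (i + 1 + 1) ≠ d i := hturn i hi
      omega
  have hlin : ∀ i < n, d i = d 0 + i * (d 1 - d 0) := by
    intro i
    induction i with
    | zero => simp
    | succ i ih =>
      intro hi
      push_cast
      linear_combination hconst i hi + ih (by omega)
  rcases Nat.lt_or_ge 1 n with hn | hn
  · have hδ : d 1 - d 0 = 1 ∨ d 1 - d 0 = -1 := by
      have := hstep 0 hn
      rw [zero_add] at this
      omega
    rcases hδ with hδ | hδ
    · exact Or.inl fun i hi => by rw [hlin i hi, hδ, mul_one]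
    · exact Or.inr fun i hi => by rw [hlin i hi, hδ]; ring
  · refine Or.inl fun i hi => ?_
    obtain rfl : i = 0 := by omega
    simp

namespace Xgrid

def IntAdj (u v : ℤ × ℤ) : Prop :=
  (v.1 = u.1 + 1 ∧ v.2 ≤ u.2) ∨ (u.1 = v.1 + 1 ∧ u.2 ≤ v.2)

lemma intAdj_comm {u v : ℤ × ℤ} : IntAdj u v ↔ IntAdj v u := by
  unfold IntAdj; tauto

lemma intAdj_neg {u v : ℤ × ℤ} : IntAdj (-u) (-v) ↔ IntAdj u v := by
  simp only [IntAdj, Prod.fst_neg, Prod.snd_neg]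
  omega

def IsChainPair (k : ℕ) (a b : ℕ → ℤ × ℤ) : Prop :=
  ∀ j j', j < k → j' < k → (IntAdj (a j) (b j') ↔ j' ≤ j)

namespace IsChainPair

variable {k : ℕ} {a b c : ℕ → ℤ × ℤ}

lemma adj (h : IsChainPair k a b) {j j' : ℕ} (hj : j < k) (hj' : j' ≤ j) :
    IntAdj (a j) (b j') :=
  (h j j' hj (by omega)).2 hj'

lemma not_adj (h : IsChainPair k a b) {j j' : ℕ} (hj : j < j') (hj' : j' < k) :
    ¬ IntAdj (a j) (b j') :=
  fun hadj => by have := (h j j' (by omega) hj').1 hadj; omega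

lemma mirror (h : IsChainPair k a b) :
    IsChainPair k (fun j => -b (k - 1 - j)) (fun j => -a (k - 1 - j)) := by
  intro j j' hj hj'
  rw [intAdj_neg, intAdj_comm, h _ _ (by omega) (by omega)]
  omega

lemma fst_eq_of_snd_ne (h : IsChainPair k a b) {j j' l l' : ℕ} (hne : (b j).1 ≠ (b j').1)
    (hjl : j ≤ l) (hj'l : j' ≤ l) (hjl' : j ≤ l') (hj'l' : j' ≤ l') (hl : l < k) (hl' : l' < k) :
    (a l).1 = (a l').1 := by
  have e₁ := h.adj hl hjl
  have e₂ := h.adj hl hj'l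
  have e₃ := h.adj hl' hjl'
  have e₄ := h.adj hl' hj'l'
  simp only [IntAdj] at *
  omega

/-- If `a j`, `a j'` lay in different columns they would flank the common column of `b 0`, `b l`;
being adjacent to `b 0` but not to `b l` would then order the rows of `b 0`, `b l` one way from
the left and the other way from the right. -/
lemma fst_eq_of_snd_eq (h : IsChainPair k a b) {j j' l : ℕ} (hb : (b l).1 = (b 0).1)
    (hj : j < l) (hj' : j' < l) (hl : l < k) : (a j).1 = (a j').1 := by
  have e₁ := h.adj (j' := 0) (show j < k by omega) (Nat.zero_le _)
  have e₂ := h.adj (j' := 0) (show j' < k by omega) (Nat.zero_le _)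
  have n₁ := h.not_adj hj hl
  have n₂ := h.not_adj hj' hl
  simp only [IntAdj] at *
  omega

lemma changesAtMostOnce_fst (h : IsChainPair k a b) : ChangesAtMostOnce k fun j => (a j).1 := by
  intro j₁ j₂ j₃ h₁₂ h₂₃ h₃
  by_contra! hne
  obtain ⟨hne₁₂, hne₂₃⟩ := hne
  have e₁ := h.adj (j := j₁) (j' := 0) (by omega) (by omega)
  have e₂ := h.adj (j := j₂) (j' := 0) (by omega) (by omega)
  have e₃ := h.adj (j := j₃) (j' := 0) h₃ (by omega)
  have e₄ := h.adj (j := j₂) (j' := j₂) (by omega) le_rfl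
  have e₅ := h.adj (j := j₃) (j' := j₂) h₃ h₂₃.le
  have e₆ := h.adj (j := j₃) (j' := j₃) h₃ le_rfl
  have n₁ := h.not_adj (j := j₁) (j' := j₂) h₁₂ (by omega)
  have n₂ := h.not_adj (j := j₁) (j' := j₃) (by omega) h₃
  have hb₃ : (b j₃).1 ≠ (b 0).1 := fun hb => hne₁₂ (h.fst_eq_of_snd_eq hb (by omega) h₂₃ h₃)
  have h₁₃ : (a j₁).1 = (a j₃).1 := by simp only [IntAdj] at e₁ e₂ e₃; omega
  have hb₂ : (b j₂).1 = (b 0).1 := by simp only [IntAdj] at e₂ e₃ e₄ e₅; omega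
  -- `b j₂` and `b j₃` flank the common column of `a j₁`, `a j₃`, and both see `a j₃` but not
  -- `a j₁`: from opposite sides this orders the rows of `a j₁`, `a j₃` both ways.
  simp only [IntAdj] at e₃ e₅ e₆ n₁ n₂
  omega

lemma changesAtMostOnce_snd (h : IsChainPair k a b) : ChangesAtMostOnce k fun j => (b j).1 := by
  intro j₁ j₂ j₃ h₁₂ h₂₃ h₃
  have := h.mirror.changesAtMostOnce_fst (k - 1 - j₃) (k - 1 - j₂) (k - 1 - j₁)
    (by omega) (by omega) (by omega)
  simp only [Prod.fst_neg, neg_inj, show k - 1 - (k - 1 - j₁) = j₁ by omega,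
    show k - 1 - (k - 1 - j₂) = j₂ by omega, show k - 1 - (k - 1 - j₃) = j₃ by omega] at this
  exact this.symm.imp Eq.symm Eq.symm

lemma firstChange_fst_le_snd (h : IsChainPair k a b)
    (ha : firstChange k (fun j => (a j).1) < k) (hb : firstChange k (fun j => (b j).1) < k) :
    firstChange k (fun j => (a j).1) ≤ firstChange k (fun j => (b j).1) := by
  set t := firstChange k fun j => (a j).1
  set t' := firstChange k fun j => (b j).1
  by_contra! hlt
  have hat' : (a t').1 = (a (k - 1)).1 :=
    h.fst_eq_of_snd_ne (apply_firstChange_ne hb) le_rfl (Nat.zero_le _) (by omega) (by omega) hb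
      (by omega)
  have ha₀ : (a t').1 = (a 0).1 := apply_eq_of_lt_firstChange (f := fun j => (a j).1) hlt
  have hak : (a (k - 1)).1 = (a t).1 :=
    h.changesAtMostOnce_fst.apply_eq_of_firstChange_le (by omega) (by omega)
  exact apply_firstChange_ne ha (by rw [← hak, ← hat', ha₀])

lemma firstChange_snd_le_succ (h : IsChainPair k a b)
    (ht : firstChange k (fun j => (a j).1) + 2 ≤ k) :
    firstChange k (fun j => (b j).1) ≤ firstChange k (fun j => (a j).1) + 1 := by
  set t := firstChange k fun j => (a j).1
  by_contra! hlt
  have hb : (b (t + 1)).1 = (b 0).1 := apply_eq_of_lt_firstChange (f := fun j => (b j).1) hlt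
  exact apply_firstChange_ne (show t < k by omega)
    (h.fst_eq_of_snd_eq hb (lt_add_one t) t.succ_pos (by omega))

lemma firstChange_snd_bounds (h : IsChainPair k a b)
    (ht : firstChange k (fun j => (a j).1) + 2 ≤ k) :
    firstChange k (fun j => (a j).1) ≤ firstChange k (fun j => (b j).1) ∧
      firstChange k (fun j => (b j).1) ≤ firstChange k (fun j => (a j).1) + 1 := by
  have hb := h.firstChange_snd_le_succ ht
  exact ⟨h.firstChange_fst_le_snd (by omega) (by omega), hb⟩

/-- `a r` and `c (r + 1)` tell `b r` and `b (r + 1)` apart in opposite ways; from the same side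
of the common column of `b r`, `b (r + 1)` this would order their rows both ways. -/
lemma fst_ne_of_trans (hab : IsChainPair k a b) (hbc : IsChainPair k b c) {r : ℕ}
    (hr : r + 1 < k) (hb : (b (r + 1)).1 = (b r).1) : (c (r + 1)).1 ≠ (a r).1 := by
  have e₁ := hab.adj (j := r) (by omega) le_rfl
  have n₁ := hab.not_adj (lt_add_one r) hr
  have e₂ := hbc.adj (j := r + 1) hr le_rfl
  have n₂ := hbc.not_adj (lt_add_one r) hr
  simp only [IntAdj] at *
  omega

end IsChainPair

lemma adj_iff {m k : ℕ} {u v : Fin m × Fin k} :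
    (Xgrid m k).Adj u v ↔ IntAdj ((u.1 : ℕ), (u.2 : ℕ)) ((v.1 : ℕ), (v.2 : ℕ)) := by
  simp only [Xgrid, SimpleGraph.fromRel_adj, IntAdj]
  constructor
  · rintro ⟨-, h⟩
    omega
  · intro h
    exact ⟨by rintro rfl; omega, by omega⟩

variable {n k M N : ℕ}

def coord (φ : Xgrid n k ↪g Xgrid M N) (i j : ℕ) : ℤ × ℤ :=
  if h : i < n ∧ j < k then
    (((φ (⟨i, h.1⟩, ⟨j, h.2⟩)).1 : ℕ), ((φ (⟨i, h.1⟩, ⟨j, h.2⟩)).2 : ℕ))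
  else 0

lemma coord_of_lt (φ : Xgrid n k ↪g Xgrid M N) {i j : ℕ} (hi : i < n) (hj : j < k) :
    coord φ i j = ((((φ (⟨i, hi⟩, ⟨j, hj⟩)).1 : ℕ) : ℤ), (((φ (⟨i, hi⟩, ⟨j, hj⟩)).2 : ℕ) : ℤ)) :=
  dif_pos ⟨hi, hj⟩

lemma isChainPair_coord (φ : Xgrid n k ↪g Xgrid M N) {i : ℕ} (hi : i + 1 < n) :
    IsChainPair k (coord φ i) (coord φ (i + 1)) := by
  intro j j' hj hj'
  rw [coord_of_lt φ (by omega) hj, coord_of_lt φ hi hj', ← adj_iff, φ.map_adj_iff, adj_iff]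
  simp only [IntAdj]
  omega

lemma changesAtMostOnce_coord (φ : Xgrid n k ↪g Xgrid M N) (hn : 2 ≤ n) {i : ℕ} (hi : i < n) :
    ChangesAtMostOnce k fun j => (coord φ i j).1 := by
  by_cases h : i + 1 < n
  · exact (isChainPair_coord φ h).changesAtMostOnce_fst
  · obtain ⟨i, rfl⟩ : ∃ i', i = i' + 1 := ⟨i - 1, by omega⟩
    exact (isChainPair_coord φ hi).changesAtMostOnce_snd

lemma exists_window_coord_fst_eq (φ : Xgrid n k ↪g Xgrid M N) (hk : 4 * n - 1 ≤ k) :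
    ∃ r, r + n ≤ k ∧
      ∀ i j, i < n → r ≤ j → j < r + n → (coord φ i j).1 = (coord φ i r).1 := by
  obtain ⟨r, hr, hT⟩ := exists_window_of_bounds_succ
    (fun i hi ht => (isChainPair_coord φ hi).firstChange_snd_bounds ht) hk
  refine ⟨r, hr, fun i j hi hrj hj => ?_⟩
  rcases hrj.eq_or_lt with rfl | hrj
  · rfl
  · exact (changesAtMostOnce_coord φ (by omega) hi).apply_eq_of_window (hT i hi) hrj.le hj hr

lemma coord_fst_eq_add_or_eq_sub (φ : Xgrid n k ↪g Xgrid M N) {r : ℕ} (hr : r + n ≤ k)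
    (hconst : ∀ i j, i < n → r ≤ j → j < r + n → (coord φ i j).1 = (coord φ i r).1) :
    (∀ i < n, (coord φ i r).1 = (coord φ 0 r).1 + i) ∨
      (∀ i < n, (coord φ i r).1 = (coord φ 0 r).1 - i) := by
  refine eq_add_or_eq_sub_of_unit_steps (fun i => (coord φ i r).1) (fun i hi => ?_)
    (fun i hi => ?_)
  · have := (isChainPair_coord φ hi).adj (j := r) (by omega) le_rfl
    simp only [IntAdj] at this
    omega
  · rw [← hconst (i + 2) (r + 1) hi (by omega) (by omega)]
    exact (isChainPair_coord φ (by omega)).fst_ne_of_trans (isChainPair_coord φ hi) (by omega)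
      (hconst (i + 1) (r + 1) (by omega) (by omega) (by omega))

def rowShift {m k k' s : ℕ} (hs : s + k ≤ k') : Xgrid m k ↪g Xgrid m k' where
  toFun v := (v.1, ⟨s + v.2, by omega⟩)
  inj' u v huv := by
    simp only [Prod.mk.injEq, Fin.mk.injEq, add_right_inj] at huv
    exact Prod.ext huv.1 (Fin.ext huv.2)
  map_rel_iff' {u v} := by
    change (Xgrid m k').Adj (u.1, ⟨s + u.2, _⟩) (v.1, ⟨s + v.2, _⟩) ↔ _
    simp only [adj_iff, IntAdj]
    omega

def rev {m k : ℕ} : Xgrid m k ≃g Xgrid m k where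
  toEquiv := Equiv.prodCongr Fin.revPerm Fin.revPerm
  map_rel_iff' {u v} := by
    simp only [Equiv.prodCongr_apply, Prod.map, Fin.revPerm_apply, adj_iff, IntAdj, Fin.val_rev]
    omega

lemma coord_comp_rev (φ : Xgrid n k ↪g Xgrid M N) {i j : ℕ} (hi : i < n) (hj : j < k) :
    coord (φ.comp rev.toEmbedding) i j = coord φ (n - 1 - i) (k - 1 - j) := by
  have hrev : rev (⟨i, hi⟩, ⟨j, hj⟩) =
      ((⟨n - 1 - i, by omega⟩, ⟨k - 1 - j, by omega⟩) : Fin n × Fin k) := by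
    ext <;> simp only [rev, RelIso.coe_fn_mk, Equiv.prodCongr_apply, Prod.map, Fin.revPerm_apply,
      Fin.val_rev] <;> omega
  rw [coord_of_lt _ hi hj, coord_of_lt _ (by omega) (by omega), ← hrev]
  rfl

lemma exists_column_grid_of_coord_fst_eq_add (φ : Xgrid n k ↪g Xgrid M N) (hn : 0 < n) {r : ℕ}
    (hr : r + n ≤ k)
    (hcol : ∀ i j, i < n → r ≤ j → j < r + n → (coord φ i j).1 = (coord φ 0 r).1 + i) :
    ∃ ψ : Xgrid n n ↪g Xgrid M N, ∃ c : ℕ, c + n ≤ M ∧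
      (∀ v : Fin n × Fin n, ((ψ v).1 : ℕ) = c + (v.1 : ℕ)) ∧
      (∀ v : Fin n × Fin n, ∃ u : Fin n × Fin k, ψ v = φ u) := by
  refine ⟨φ.comp (rowShift hr), (φ (⟨0, hn⟩, ⟨r, by omega⟩)).1, ?_, fun v => ?_,
    fun v => ⟨_, rfl⟩⟩
  · have hlast := hcol (n - 1) r (by omega) le_rfl (by omega)
    rw [coord_of_lt φ (by omega) (by omega), coord_of_lt φ hn (by omega)] at hlast
    have := (φ (⟨n - 1, by omega⟩, ⟨r, by omega⟩)).1.isLt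
    omega
  · have hv := hcol v.1 (r + v.2) v.1.isLt (by omega) (by omega)
    rw [coord_of_lt φ v.1.isLt (by omega), coord_of_lt φ hn (by omega)] at hv
    simp only [Fin.eta] at hv
    change ((φ (v.1, ⟨r + v.2, _⟩)).1 : ℕ) = _
    omega

lemma exists_column_grid_of_coord_fst_eq_sub (φ : Xgrid n k ↪g Xgrid M N) (hn : 0 < n) {r : ℕ}
    (hr : r + n ≤ k)
    (hcol : ∀ i j, i < n → r ≤ j → j < r + n → (coord φ i j).1 = (coord φ 0 r).1 - i) :
    ∃ ψ : Xgrid n n ↪g Xgrid M N, ∃ c : ℕ, c + n ≤ M ∧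
      (∀ v : Fin n × Fin n, ((ψ v).1 : ℕ) = c + (v.1 : ℕ)) ∧
      (∀ v : Fin n × Fin n, ∃ u : Fin n × Fin k, ψ v = φ u) := by
  obtain ⟨ψ, c, hc, hψ, himg⟩ := exists_column_grid_of_coord_fst_eq_add (φ.comp rev.toEmbedding)
    hn (r := k - (r + n)) (by omega) fun i j hi hrj hj => by
      rw [coord_comp_rev φ hi (by omega), coord_comp_rev φ hn (by omega),
        hcol (n - 1 - i) (k - 1 - j) (by omega) (by omega) (by omega),
        hcol (n - 1 - 0) (k - 1 - (k - (r + n))) (by omega) (by omega) (by omega)]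
      omega
  exact ⟨ψ, c, hc, hψ, fun v => let ⟨u, hu⟩ := himg v; ⟨_, hu⟩⟩

end Xgrid

open Xgrid in
theorem Xgrid_embedding_contains_column_grid_general (n M N : ℕ) (hn : 1 ≤ n)
    (φ : Xgrid n (4 * n - 1) ↪g Xgrid M N) :
    ∃ ψ : Xgrid n n ↪g Xgrid M N, ∃ c : ℕ,
      c + n ≤ M ∧
      (∀ v : Fin n × Fin n, ((ψ v).1 : ℕ) = c + (v.1 : ℕ)) ∧
      (∀ v : Fin n × Fin n, ∃ u : Fin n × Fin (4 * n - 1), ψ v = φ u) := by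
  obtain ⟨r, hr, hconst⟩ := exists_window_coord_fst_eq φ le_rfl
  rcases coord_fst_eq_add_or_eq_sub φ hr hconst with hup | hdown
  · exact exists_column_grid_of_coord_fst_eq_add φ hn hr fun i j hi hrj hj =>
      (hconst i j hi hrj hj).trans (hup i hi)
  · exact exists_column_grid_of_coord_fst_eq_sub φ hn hr fun i j hi hrj hj =>
      (hconst i j hi hrj hj).trans (hdown i hi)

/-- for n ≥ 1, every induced-subgraph embedding φ of
`X_{n,4n−1}` into `X_{M,N}` (M ≥ n, N ≥ 4n−1) contains a copy of `X_{n,n}`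
occupying exactly n contiguous columns of `X_{M,N}` — i.e. there is an
embedding ψ of `X_{n,n}` whose image lies inside the image of φ, and a column
offset c with c + n ≤ M such that ψ sends column i of `X_{n,n}` into column
c + i of `X_{M,N}`. -/
theorem Xgrid_embedding_contains_column_grid (n M N : ℕ) (hn : 1 ≤ n)
    (hM : n ≤ M) (hN : 4 * n - 1 ≤ N)
    (φ : Xgrid n (4 * n - 1) ↪g Xgrid M N) :
    ∃ ψ : Xgrid n n ↪g Xgrid M N, ∃ c : ℕ,
      c + n ≤ M ∧
      (∀ v : Fin n × Fin n, ((ψ v).1 : ℕ) = c + (v.1 : ℕ)) ∧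
      (∀ v : Fin n × Fin n, ∃ u : Fin n × Fin (4 * n - 1), ψ v = φ u) :=
  Xgrid_embedding_contains_column_grid_general n M N hn φ
end

section
/- Let G be a split graph with a fixed partition of its vertex set into a clique C and an independent set I, and let G* be the bipartite graph obtained from G by deleting all edges within C. Then G has Dilworth number at most 2 if and only if G* is a bichain graph (each part of the bipartition of G* partitions into at most two chains). -/
/-!
On each side of the split partition, `x ⪯ y` amounts to inclusion of `G*`-neighbourhoods, every
vertex of `I` is `⪯` every vertex of `C`, and `⪯` is a preorder. Both conditions therefore say
that this preorder has width at most two, resp. is covered by two chains, and the theorem is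
Dilworth's theorem in width two (for arbitrary, possibly infinite, preorders).

For the latter, the two chains are a 2-colouring of the incomparability graph, so it suffices to
rule out odd closed walks. Take a cyclic sequence `x₀ ∥ x₁ ∥ ⋯ ∥ xₙ = x₀` with `n` odd. Absence of
antichains of size three makes `xₖ` and `xₖ₊₂` comparable. If some `xₖ ∥ xₖ₊₃`, cutting out
`xₖ₊₁, xₖ₊₂` gives a shorter odd cycle. Otherwise `xₖ ≤ xₖ₊₂` implies `xₖ₊₁ ≤ xₖ₊₃`, so (up to
duality) `xₖ ≤ xₖ₊₂` for all `k`, and going around the odd cycle gives `x₀ ≤ xₙ₊₁ = x₁`.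
-/

/-- The bipartite graph `G*` obtained from a split graph `G` (with clique
given by `P = true` and independent set by `P = false`) by deleting all edges
inside the clique. -/
def removeCliqueEdges {V : Type*} (G : SimpleGraph V) (P : V → Bool) :
    SimpleGraph V where
  Adj a b := G.Adj a b ∧ ¬ (P a = true ∧ P b = true)
  symm := ⟨by rintro a b ⟨h1, h2⟩; exact ⟨h1.symm, by tauto⟩⟩
  loopless := ⟨fun a h => G.loopless.irrefl a h.1⟩

/-- The Dilworth quasi-order on vertices: `x ⪯ y` iff `N(x) ⊆ N(y) ∪ {y}`. -/
def dilPre {V : Type*} (G : SimpleGraph V) (x y : V) : Prop :=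
  G.neighborSet x ⊆ G.neighborSet y ∪ {y}

open Relation

theorem Nat.add_one_mod_of_lt {j m : ℕ} (h : j % m + 1 < m) : (j + 1) % m = j % m + 1 := by
  have h1 : 1 % m = 1 := Nat.mod_eq_of_lt (by omega)
  rw [Nat.add_mod_of_add_mod_lt (by rwa [h1]), h1]

theorem Nat.add_one_mod_of_eq {j m : ℕ} (h : j % m + 1 = m) : (j + 1) % m = 0 := by
  obtain ⟨b, rfl⟩ : ∃ b, m = b + 1 := ⟨m - 1, by omega⟩
  exact Nat.succ_mod_succ_eq_zero_iff.mpr (by omega)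

theorem SimpleGraph.Walk.adj_getVert_mod {V : Type*} {G : SimpleGraph V} {u : V}
    (w : G.Walk u u) (hw : 0 < w.length) (i : ℕ) :
    G.Adj (w.getVert (i % w.length)) (w.getVert ((i + 1) % w.length)) := by
  have hi := Nat.mod_lt i hw
  rcases Nat.lt_or_ge (i % w.length + 1) w.length with hlt | hge
  · rw [Nat.add_one_mod_of_lt hlt]
    exact w.adj_getVert_succ hi
  · have hlast : i % w.length + 1 = w.length := by omega
    rw [Nat.add_one_mod_of_eq hlast, w.getVert_zero]
    simpa only [hlast, w.getVert_length] using w.adj_getVert_succ hi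

theorem exists_shorter_cycle_of_rel_add_three {α : Type*} {r : α → α → Prop} {x : ℕ → α} {m k : ℕ}
    (hm : 0 < m) (hper : ∀ i, x (i + (m + 2)) = x i) (hx : ∀ i, r (x i) (x (i + 1)))
    (hk : r (x k) (x (k + 3))) :
    ∃ y : ℕ → α, (∀ j, y (j + m) = y j) ∧ ∀ j, r (y j) (y (j + 1)) := by
  refine ⟨fun j => x (k + 3 + j % m), fun j => by simp, fun j => ?_⟩
  rcases Nat.lt_or_ge (j % m + 1) m with hj | hj
  · simpa only [Nat.add_one_mod_of_lt hj, ← add_assoc] using hx (k + 3 + j % m)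
  · have hlast : j % m + 1 = m := by
      have hlt := Nat.mod_lt j hm
      omega
    have hk' : x (k + 3 + j % m) = x k := by
      rw [show k + 3 + j % m = k + (m + 2) by omega, hper]
    simpa only [hk', Nat.add_one_mod_of_eq hlast, add_zero] using hk

section Incomparability

variable {α : Type*} [Preorder α]

theorem le_of_incompRel_of_le {a b c d : α} (hab : IncompRel (· ≤ ·) a b)
    (hcd : IncompRel (· ≤ ·) c d) (had : SymmGen (· ≤ ·) a d) (hbd : SymmGen (· ≤ ·) b d)
    (hac : a ≤ c) : b ≤ d := by
  have had' : a ≤ d := had.resolve_right fun hda => hcd.not_ge (hda.trans hac)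
  exact hbd.resolve_right fun hdb => hab.not_le (had'.trans hdb)

theorem le_add_two_of_incompRel_cycle {x : ℕ → α}
    (hx : ∀ i, IncompRel (· ≤ ·) (x i) (x (i + 1)))
    (h2 : ∀ i, SymmGen (· ≤ ·) (x i) (x (i + 2))) (h3 : ∀ i, SymmGen (· ≤ ·) (x i) (x (i + 3)))
    (h0 : x 0 ≤ x 2) (i : ℕ) : x i ≤ x (i + 2) := by
  induction i with
  | zero => exact h0
  | succ i ih => exact le_of_incompRel_of_le (hx i) (hx (i + 2)) (h3 i) (h2 (i + 1)) ih

theorem not_le_of_odd_incompRel_cycle {x : ℕ → α} {n : ℕ} (hn : Odd n)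
    (hper : ∀ i, x (i + n) = x i) (hx : ∀ i, IncompRel (· ≤ ·) (x i) (x (i + 1)))
    (h2 : ∀ i, SymmGen (· ≤ ·) (x i) (x (i + 2))) (h3 : ∀ i, SymmGen (· ≤ ·) (x i) (x (i + 3))) :
    ¬ x 0 ≤ x 2 := by
  intro h0
  have hstep := le_add_two_of_incompRel_cycle hx h2 h3 h0
  have hmul : ∀ m, x 0 ≤ x (2 * m) := fun m => by
    induction m with
    | zero => exact le_rfl
    | succ m ih => exact ih.trans (by simpa [mul_add, add_comm] using hstep (2 * m))
  obtain ⟨m, rfl⟩ := hn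
  have h01 : x 0 ≤ x 1 := by
    simpa [show 2 * (m + 1) = 1 + (2 * m + 1) by ring, hper] using hmul (m + 1)
  exact (hx 0).not_le h01

theorem even_of_incompRel_cycle
    (htri : ∀ a b c : α, IncompRel (· ≤ ·) a b → IncompRel (· ≤ ·) b c → SymmGen (· ≤ ·) a c)
    (n : ℕ) (x : ℕ → α) (hper : ∀ i, x (i + n) = x i)
    (hx : ∀ i, IncompRel (· ≤ ·) (x i) (x (i + 1))) : Even n := by
  induction n using Nat.strong_induction_on generalizing x with
  | _ n ih =>
  by_contra hodd
  rw [Nat.not_even_iff_odd] at hodd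
  have h2 : ∀ i, SymmGen (· ≤ ·) (x i) (x (i + 2)) := fun i => htri _ _ _ (hx i) (hx (i + 1))
  by_cases h3 : ∀ i, SymmGen (· ≤ ·) (x i) (x (i + 3))
  · rcases h2 0 with h02 | h20
    · exact not_le_of_odd_incompRel_cycle hodd hper hx h2 h3 h02
    · exact not_le_of_odd_incompRel_cycle (α := αᵒᵈ) (x := OrderDual.toDual ∘ x) hodd
        (fun i => congrArg OrderDual.toDual (hper i)) (fun i => (hx i).symm) (fun i => (h2 i).symm)
        (fun i => (h3 i).symm) h20
  · obtain ⟨k, hk⟩ := not_forall.mp h3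
    rcases n with _ | _ | m
    · exact Nat.not_odd_zero hodd
    · exact (hx 0).not_le (hper 0).ge
    obtain ⟨y, hyper, hy⟩ := exists_shorter_cycle_of_rel_add_three
      (by rcases hodd with ⟨j, hj⟩; omega) hper hx (not_symmGen_iff.mp hk)
    exact (Nat.not_even_iff_odd.mpr hodd) ((ih m (by omega) y hyper hy).add even_two)

def incompGraph (α : Type*) [Preorder α] : SimpleGraph α where
  Adj := IncompRel (· ≤ ·)
  symm := ⟨fun _ _ => IncompRel.symm⟩
  loopless := ⟨fun _ h => h.not_le le_rfl⟩

theorem exists_chain_coloring_of_incompRel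
    (htri : ∀ a b c : α, IncompRel (· ≤ ·) a b → IncompRel (· ≤ ·) b c → SymmGen (· ≤ ·) a c) :
    ∃ f : α → Bool, ∀ a b, f a = f b → SymmGen (· ≤ ·) a b := by
  have hcol : (incompGraph α).Colorable 2 := by
    refine SimpleGraph.two_colorable_iff_forall_loop_even.mpr fun u w => ?_
    rcases Nat.eq_zero_or_pos w.length with h0 | hpos
    · exact h0 ▸ Even.zero
    · exact even_of_incompRel_cycle htri w.length (fun i => w.getVert (i % w.length))
        (fun i => by simp) (w.adj_getVert_mod hpos)
  obtain ⟨c⟩ := hcol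
  let c' := SimpleGraph.recolorOfEquiv _ finTwoEquiv c
  exact ⟨c', fun a b hab => not_incompRel_iff_symmGen.mp fun h => c'.valid h hab⟩

theorem exists_chain_coloring_iff :
    (∃ f : α → Bool, ∀ a b, f a = f b → SymmGen (· ≤ ·) a b) ↔
      ∀ a b c : α, a ≠ b → a ≠ c → b ≠ c →
        SymmGen (· ≤ ·) a b ∨ SymmGen (· ≤ ·) a c ∨ SymmGen (· ≤ ·) b c := by
  constructor
  · rintro ⟨f, hf⟩ a b c - - -
    have hpigeon : f a = f b ∨ f a = f c ∨ f b = f c := by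
      cases f a <;> cases f b <;> cases f c <;> simp
    exact hpigeon.imp (hf a b) (Or.imp (hf a c) (hf b c))
  · refine fun hwidth => exists_chain_coloring_of_incompRel fun a b c hab hbc => ?_
    by_cases hac : a = c
    · exact hac ▸ SymmGen.refl _ a
    rcases hwidth a b c hab.ne hac hbc.ne with h | h | h
    · exact absurd h (not_symmGen_iff.mpr hab)
    · exact h
    · exact absurd h (not_symmGen_iff.mpr hbc)

end Incomparability

section VicinalPreorder

variable {V : Type*}

theorem dilPre_refl (G : SimpleGraph V) (x : V) : dilPre G x x :=
  Set.subset_union_left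

theorem dilPre_trans {G : SimpleGraph V} {x y z : V} (hxy : dilPre G x y) (hyz : dilPre G y z) : dilPre G x z := by
  intro w hxw
  rcases hxy hxw with hyw | rfl
  · exact hyz hyw
  by_cases hwz : w = z
  · exact Or.inr hwz
  -- `x` is a neighbour of `w`, so `x ⪯ w ⪯ z` forces `x = z` or `z ∈ N(x) ⊆ N[w]`
  refine Or.inl ?_
  rcases hyz hxw.symm with hzx | rfl
  · exact ((hxy (G.adj_symm hzx)).resolve_right (Ne.symm hwz)).symm
  · exact hxw

abbrev vicinalPreorder (G : SimpleGraph V) : Preorder V where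
  le := dilPre G
  le_refl := dilPre_refl G
  le_trans _ _ _ := dilPre_trans

end VicinalPreorder

section SplitGraph

variable {V : Type*} {G : SimpleGraph V} {P : V → Bool} {u v : V}

theorem dilPre_of_false_of_true
    (hclique : ∀ a b, a ≠ b → P a = true → P b = true → G.Adj a b)
    (hindep : ∀ a b, P a = false → P b = false → ¬ G.Adj a b)
    (hu : P u = false) (hv : P v = true) : dilPre G u v := by
  intro w huw
  have hw : P w = true := by
    by_contra hw
    exact hindep u w hu (Bool.of_not_eq_true hw) huw
  by_cases hwv : w = v
  · exact Or.inr hwv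
  · exact Or.inl (hclique v w (Ne.symm hwv) hv hw)

theorem dilPre_iff_neighborSet_subset_of_true
    (hclique : ∀ a b, a ≠ b → P a = true → P b = true → G.Adj a b)
    (hu : P u = true) (hv : P v = true) :
    dilPre G u v ↔
      (removeCliqueEdges G P).neighborSet u ⊆ (removeCliqueEdges G P).neighborSet v := by
  constructor
  · rintro h w ⟨huw, hw⟩
    rcases h huw with hvw | rfl
    · exact ⟨hvw, by simp_all⟩
    · exact absurd ⟨hu, hv⟩ hw
  · intro h w huw
    by_cases hw : P w = true
    · by_cases hwv : w = v
      · exact Or.inr hwv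
      · exact Or.inl (hclique v w (Ne.symm hwv) hv hw)
    · exact Or.inl (h ⟨huw, by simp [hw]⟩).1

theorem dilPre_iff_neighborSet_subset_of_false
    (hindep : ∀ a b, P a = false → P b = false → ¬ G.Adj a b)
    (hu : P u = false) (hv : P v = false) :
    dilPre G u v ↔
      (removeCliqueEdges G P).neighborSet u ⊆ (removeCliqueEdges G P).neighborSet v := by
  constructor
  · rintro h w ⟨huw, -⟩
    rcases h huw with hvw | rfl
    · exact ⟨hvw, by simp [hv]⟩
    · exact absurd huw (hindep u w hu hv)
  · intro h w huw
    exact Or.inl (h ⟨huw, by simp [hu]⟩).1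

theorem symmGen_dilPre_of_ne
    (hclique : ∀ a b, a ≠ b → P a = true → P b = true → G.Adj a b)
    (hindep : ∀ a b, P a = false → P b = false → ¬ G.Adj a b) (h : P u ≠ P v) :
    SymmGen (dilPre G) u v := by
  cases hu : P u <;> cases hv : P v <;> simp only [hu, hv, ne_eq, not_true_eq_false] at h
  · exact Or.inl (dilPre_of_false_of_true hclique hindep hu hv)
  · exact Or.inr (dilPre_of_false_of_true hclique hindep hv hu)

theorem dilPre_iff_neighborSet_subset
    (hclique : ∀ a b, a ≠ b → P a = true → P b = true → G.Adj a b)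
    (hindep : ∀ a b, P a = false → P b = false → ¬ G.Adj a b) (h : P u = P v) :
    dilPre G u v ↔
      (removeCliqueEdges G P).neighborSet u ⊆ (removeCliqueEdges G P).neighborSet v := by
  cases hu : P u
  · exact dilPre_iff_neighborSet_subset_of_false hindep hu (h ▸ hu)
  · exact dilPre_iff_neighborSet_subset_of_true hclique hu (h ▸ hu)

theorem forall_symmGen_dilPre_iff
    (hclique : ∀ a b, a ≠ b → P a = true → P b = true → G.Adj a b)
    (hindep : ∀ a b, P a = false → P b = false → ¬ G.Adj a b) (f : V → Bool) :
    (∀ u v, f u = f v → SymmGen (dilPre G) u v) ↔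
      ∀ u v, P u = P v → f u = f v →
        ((removeCliqueEdges G P).neighborSet u ⊆ (removeCliqueEdges G P).neighborSet v ∨
          (removeCliqueEdges G P).neighborSet v ⊆ (removeCliqueEdges G P).neighborSet u) := by
  refine forall₂_congr fun u v => ⟨fun hf hP huv => ?_, fun hf huv => ?_⟩
  · rw [← dilPre_iff_neighborSet_subset hclique hindep hP,
      ← dilPre_iff_neighborSet_subset hclique hindep hP.symm]
    exact hf huv
  · by_cases hP : P u = P v
    · rw [SymmGen, dilPre_iff_neighborSet_subset hclique hindep hP,
        dilPre_iff_neighborSet_subset hclique hindep hP.symm]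
      exact hf hP huv
    · exact symmGen_dilPre_of_ne hclique hindep hP

end SplitGraph

/-- let `G` be a split graph with a fixed partition into a
clique `C` (`P = true`) and an independent set `I` (`P = false`), and let
`G*` be obtained from `G` by deleting the edges inside `C`. Then `G` has
Dilworth number at most 2 (any three distinct vertices contain a
`⪯`-comparable pair) iff `G*` is a bichain graph (there is a two-colouring
of its vertices so that any two vertices in the same part of the bipartition
with the same colour have `G*`-neighbourhoods comparable by inclusion). -/
theorem split_dilworth_iff_bichain {V : Type*} (G : SimpleGraph V)
    (P : V → Bool)
    (hclique : ∀ a b, a ≠ b → P a = true → P b = true → G.Adj a b)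
    (hindep : ∀ a b, P a = false → P b = false → ¬ G.Adj a b) :
    (∀ x y z : V, x ≠ y → x ≠ z → y ≠ z →
        (dilPre G x y ∨ dilPre G y x ∨ dilPre G x z ∨ dilPre G z x ∨
         dilPre G y z ∨ dilPre G z y)) ↔
    ∃ f : V → Bool, ∀ u v : V, P u = P v → f u = f v →
      ((removeCliqueEdges G P).neighborSet u ⊆
          (removeCliqueEdges G P).neighborSet v ∨
       (removeCliqueEdges G P).neighborSet v ⊆
          (removeCliqueEdges G P).neighborSet u) := by
  let _ : Preorder V := vicinalPreorder G
  calc _ ↔ ∀ x y z : V, x ≠ y → x ≠ z → y ≠ z →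
          SymmGen (· ≤ ·) x y ∨ SymmGen (· ≤ ·) x z ∨ SymmGen (· ≤ ·) y z := by
        simp only [SymmGen, or_assoc]; rfl
    _ ↔ _ := exists_chain_coloring_iff.symm
    _ ↔ _ := exists_congr (forall_symmGen_dilPre_iff hclique hindep)
end

section
/- If a hereditary class C of graphs has unbounded clique-width and contains no minimal hereditary subclass of unbounded clique-width, then C contains an infinite antichain under the induced subgraph relation. (One constructs a strictly decreasing sequence C = C_0 ⊃ C_1 ⊃ ⋯ of hereditary subclasses of unbounded clique-width, where C_{i+1} is obtained from C_i by forbidding some graph G_i ∈ C_i; the graphs G_0, G_1, ... form an antichain.) -/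
/-- A finite graph: a graph on a vertex set `Fin n`. -/
abbrev FinGraph := Σ n : ℕ, SimpleGraph (Fin n)

/-- `H` is (isomorphic to) an induced subgraph of `G`. -/
def IsInducedSub (H G : FinGraph) : Prop := Nonempty (H.2 ↪g G.2)

/-- A hereditary class: closed under induced subgraphs. -/
def Hereditary (C : Set FinGraph) : Prop :=
  ∀ G ∈ C, ∀ H : FinGraph, IsInducedSub H G → H ∈ C

/-- The class `C` has unbounded clique-width (for an abstract clique-width
function `cwd`). -/
def UnboundedCW (cwd : FinGraph → ℕ) (C : Set FinGraph) : Prop :=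
  ∀ b : ℕ, ∃ G ∈ C, b < cwd G

/-- `C` is a minimal hereditary class of unbounded clique-width: it is
hereditary, of unbounded clique-width, and every proper hereditary subclass
has bounded clique-width. -/
def MinimalUnboundedCW (cwd : FinGraph → ℕ) (C : Set FinGraph) : Prop :=
  Hereditary C ∧ UnboundedCW cwd C ∧
    ∀ D : Set FinGraph, Hereditary D → D ⊆ C → D ≠ C → ¬ UnboundedCW cwd D

/-- if a hereditary class `C` has unbounded clique-width but
contains no minimal hereditary subclass of unbounded clique-width, then `C`
contains an infinite antichain under the induced subgraph relation. Here
`cwd` is any abstract clique-width function that is monotone under induced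
subgraphs. -/
theorem no_minimal_subclass_gives_antichain (cwd : FinGraph → ℕ)
    (hmono : ∀ H G : FinGraph, IsInducedSub H G → cwd H ≤ cwd G)
    (C : Set FinGraph) (hC : Hereditary C) (hub : UnboundedCW cwd C)
    (hnomin : ¬ ∃ D : Set FinGraph, D ⊆ C ∧ MinimalUnboundedCW cwd D) :
    ∃ f : ℕ → FinGraph, (∀ i, f i ∈ C) ∧
      ∀ i j : ℕ, i ≠ j → ¬ IsInducedSub (f i) (f j) := by
  classical
  set P : Set FinGraph → Prop :=
    fun D => D ⊆ C ∧ Hereditary D ∧ UnboundedCW cwd D with hP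
  have step : ∀ D, P D → ∃ q : FinGraph × Set FinGraph,
      q.1 ∈ D ∧ P q.2 ∧ q.2 ⊆ D ∧ q.1 ∉ q.2 := by
    intro D hD
    obtain ⟨hsub, hher, hub'⟩ := hD
    have hnm : ¬ MinimalUnboundedCW cwd D := fun h => hnomin ⟨D, hsub, h⟩
    have : ¬ ∀ E : Set FinGraph, Hereditary E → E ⊆ D → E ≠ D →
        ¬ UnboundedCW cwd E := fun h => hnm ⟨hher, hub', h⟩
    push_neg at this
    obtain ⟨E, hEher, hEsub, hEne, hEub⟩ := this
    obtain ⟨G, hGD, hGE⟩ : ∃ G ∈ D, G ∉ E := by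
      by_contra h; push_neg at h
      exact hEne (Set.Subset.antisymm hEsub h)
    exact ⟨(G, E), hGD, ⟨hEsub.trans hsub, hEher, hEub⟩, hEsub, hGE⟩
  choose pick hmem hPnext hsubnext hnotmem using step
  -- the sequence of classes
  let st : ℕ → {D : Set FinGraph // P D} := fun n =>
    Nat.rec ⟨C, Set.Subset.rfl, hC, hub⟩
      (fun _ s => ⟨(pick s.1 s.2).2, hPnext s.1 s.2⟩) n
  let Gs : ℕ → FinGraph := fun n => (pick (st n).1 (st n).2).1
  have hGmem : ∀ n, Gs n ∈ (st n).1 := fun n => hmem _ _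
  have hstep : ∀ n, (st (n + 1)).1 ⊆ (st n).1 := fun n => hsubnext _ _
  have hchain : ∀ i j : ℕ, i ≤ j → (st j).1 ⊆ (st i).1 := by
    intro i j hij
    induction j with
    | zero => simp_all
    | succ j ih =>
      rcases Nat.lt_or_ge i (j + 1) with h | h
      · exact (hstep j).trans (ih (Nat.lt_succ_iff.mp h))
      · have : i = j + 1 := le_antisymm hij h
        subst this; exact Set.Subset.rfl
  have hGC : ∀ n, Gs n ∈ C := fun n => (st n).2.1 (hGmem n)
  have key : ∀ i j : ℕ, i < j → ¬ IsInducedSub (Gs i) (Gs j) := by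
    intro i j hij hsub
    have h1 : Gs j ∈ (st (i + 1)).1 := hchain _ _ hij (hGmem j)
    have h2 : Gs i ∈ (st (i + 1)).1 := (st (i + 1)).2.2.1 _ h1 _ hsub
    exact hnotmem (st i).1 (st i).2 h2
  -- vertex counts
  let m : ℕ → ℕ := fun n => (Gs n).1
  have hmin : ∀ n : ℕ, ∃ i, n < i ∧ ∀ k, n < k → m i ≤ m k := by
    intro n
    have hne : (m '' Set.Ioi n).Nonempty := ⟨m (n + 1), ⟨n + 1, by simp, rfl⟩⟩
    obtain ⟨i, hi, hmi⟩ := Nat.sInf_mem hne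
    exact ⟨i, hi, fun k hk => hmi ▸ Nat.sInf_le ⟨k, hk, rfl⟩⟩
  let jj : ℕ → ℕ := fun k =>
    Nat.rec (hmin 0).choose (fun _ p => (hmin p).choose) k
  have jstep : ∀ k, jj k < jj (k + 1) := fun k => (hmin (jj k)).choose_spec.1
  have jmono : StrictMono jj := strictMono_nat_of_lt_succ jstep
  have jpos : ∀ k, 0 < jj k := by
    intro k
    have h0 : 0 < jj 0 := (hmin 0).choose_spec.1
    exact lt_of_lt_of_le h0 (jmono.le_iff_le.mpr (Nat.zero_le k))
  have jminle : ∀ k l : ℕ, k < l → m (jj k) ≤ m (jj l) := by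
    intro k l hkl
    cases k with
    | zero => exact (hmin 0).choose_spec.2 _ (jpos l)
    | succ k' =>
      have : jj k' < jj l := lt_trans (jstep k') (jmono hkl)
      exact (hmin (jj k')).choose_spec.2 _ this
  refine ⟨fun k => Gs (jj k), fun k => hGC _, ?_⟩
  intro i j hij hsub
  rcases lt_or_gt_of_ne hij with h | h
  · exact key _ _ (jmono h) hsub
  · -- j < i, and we have an embedding e : Gs (jj i) ↪g Gs (jj j)
    obtain ⟨e⟩ := hsub
    have hle1 : m (jj i) ≤ m (jj j) := by
      simpa using Fintype.card_le_of_embedding e.toEmbedding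
    have hle2 : m (jj j) ≤ m (jj i) := jminle _ _ h
    have hcard : Fintype.card (Fin (m (jj i))) = Fintype.card (Fin (m (jj j))) := by
      simp [le_antisymm hle1 hle2]
    have hbij : Function.Bijective e :=
      (Fintype.bijective_iff_injective_and_card e).mpr ⟨e.injective, hcard⟩
    have iso : (Gs (jj i)).2 ≃g (Gs (jj j)).2 :=
      { toEquiv := Equiv.ofBijective e hbij
        map_rel_iff' := e.map_rel_iff }
    exact key _ _ (jmono h) ⟨iso.symm.toRelEmbedding⟩
end
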